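/- arXiv:1401.3723 — 2 statements merged into one kernel-verified Lean document; each statement's English description precedes it below -/
import Mathlib

section
/- Let p be an h.v. model, and let p_a, p_b be the marginals of p on X_a×Y×Λ and X_b×Y×Λ respectively. Then p satisfies outcome independence if and only if p = p_a ⊗_{Y×Λ} p_b (the fiber product of p_a and p_b over Y×Λ). -/
open MeasureTheory Set

/-- The conditional probability `p[S‖m]` of an event `S` given a sub-σ-algebra `m`:
the conditional expectation, with respect to `p`, of the indicator function of `S` given `m`. -/
noncomputable def condProb {α : Type*} [MeasurableSpace α]
    (p : Measure α) (m : MeasurableSpace α) (S : Set α) : α → ℝ :=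
  MeasureTheory.condExp m p (S.indicator fun _ => (1 : ℝ))

/-- `f : Z → ℝ` is a (measurable) version of the conditional probability, with respect to `p`,
of the event `S` given the coordinate projection `π : α → Z`. -/
def IsCondVersion {α Z : Type*} [MeasurableSpace α] [MeasurableSpace Z]
    (p : Measure α) (π : α → Z) (S : Set α) (f : Z → ℝ) : Prop :=
  Measurable f ∧
    (fun a => f (π a)) =ᵐ[p] condProb p (MeasurableSpace.comap π inferInstance) S

section HiddenVariable

/- Outcome spaces `Xa`, `Xb` are finite with the power-set σ-algebra; measurement spaces
`Ya`, `Yb` and the hidden-variable space `Λ` are arbitrary measurable spaces.  A hidden-variable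
model is a (probability) measure on `(Xa × Xb) × (Ya × Yb) × Λ`; an empirical model is a
(probability) measure on `(Xa × Xb) × (Ya × Yb)`. -/
variable {Xa Xb Ya Yb : Type*} {Λ : Type*}
  [Fintype Xa] [MeasurableSpace Xa] [DiscreteMeasurableSpace Xa]
  [Fintype Xb] [MeasurableSpace Xb] [DiscreteMeasurableSpace Xb]
  [MeasurableSpace Ya] [MeasurableSpace Yb] [MeasurableSpace Λ]

/-- The sub-σ-algebra `𝒴 ⊗ ℒ` of events depending on the measurements and the hidden variable. -/
def mYL : MeasurableSpace ((Xa × Xb) × (Ya × Yb) × Λ) :=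
  MeasurableSpace.comap (fun ω => ω.2) inferInstance

/-- The sub-σ-algebra `𝒴a ⊗ ℒ` of events depending on Alice's measurement and the hidden
variable. -/
def mYaL : MeasurableSpace ((Xa × Xb) × (Ya × Yb) × Λ) :=
  MeasurableSpace.comap (fun ω => (ω.2.1.1, ω.2.2)) inferInstance

/-- The sub-σ-algebra `𝒴b ⊗ ℒ` of events depending on Bob's measurement and the hidden
variable. -/
def mYbL : MeasurableSpace ((Xa × Xb) × (Ya × Yb) × Λ) :=
  MeasurableSpace.comap (fun ω => (ω.2.1.2, ω.2.2)) inferInstance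

/-- The sub-σ-algebra `𝒴` of events depending on the measurements only. -/
def mY : MeasurableSpace ((Xa × Xb) × (Ya × Yb) × Λ) :=
  MeasurableSpace.comap (fun ω => ω.2.1) inferInstance

/-- **Locality**: `p[x‖𝒴⊗ℒ] = p[x_a‖𝒴a⊗ℒ] ⬝ p[x_b‖𝒴b⊗ℒ]` a.s., for every outcome `x`. -/
def Locality (p : Measure ((Xa × Xb) × (Ya × Yb) × Λ)) : Prop :=
  ∀ x : Xa × Xb,
    condProb p mYL {ω | ω.1 = x} =ᵐ[p]
      fun ω => condProb p mYaL {ω' | ω'.1.1 = x.1} ω * condProb p mYbL {ω' | ω'.1.2 = x.2} ω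

/-- **Parameter independence**: `p[x_a‖𝒴⊗ℒ] = p[x_a‖𝒴a⊗ℒ]` a.s. for every `x_a`, and likewise
with `a` and `b` interchanged. -/
def ParameterIndependence (p : Measure ((Xa × Xb) × (Ya × Yb) × Λ)) : Prop :=
  (∀ xa : Xa, condProb p mYL {ω | ω.1.1 = xa} =ᵐ[p] condProb p mYaL {ω | ω.1.1 = xa}) ∧
  (∀ xb : Xb, condProb p mYL {ω | ω.1.2 = xb} =ᵐ[p] condProb p mYbL {ω | ω.1.2 = xb})

/-- **Outcome independence**: `p[x‖𝒴⊗ℒ] = p[x_a‖𝒴⊗ℒ] ⬝ p[x_b‖𝒴⊗ℒ]` a.s., for every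
outcome `x`. -/
def OutcomeIndependence (p : Measure ((Xa × Xb) × (Ya × Yb) × Λ)) : Prop :=
  ∀ x : Xa × Xb,
    condProb p mYL {ω | ω.1 = x} =ᵐ[p]
      fun ω => condProb p mYL {ω' | ω'.1.1 = x.1} ω * condProb p mYL {ω' | ω'.1.2 = x.2} ω

/-- **λ-independence**: `p[L‖𝒴] = p(L)` a.s., for every event `L` of the hidden-variable
space. -/
def LambdaIndependence (p : Measure ((Xa × Xb) × (Ya × Yb) × Λ)) : Prop :=
  ∀ L : Set Λ, MeasurableSet L →
    condProb p mY {ω | ω.2.2 ∈ L} =ᵐ[p] fun _ => (p {ω | ω.2.2 ∈ L}).toReal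

/-- **Weak determinism**: `p[x‖𝒴⊗ℒ] ∈ {0,1}` a.s., for every outcome `x`. -/
def WeakDeterminism (p : Measure ((Xa × Xb) × (Ya × Yb) × Λ)) : Prop :=
  ∀ x : Xa × Xb, ∀ᵐ ω ∂p, condProb p mYL {ω' | ω'.1 = x} ω ∈ ({0, 1} : Set ℝ)

/-- **Strong determinism**: `p[x_a‖𝒴a⊗ℒ] ∈ {0,1}` a.s. for every `x_a`, and likewise with `a`
and `b` interchanged. -/
def StrongDeterminism (p : Measure ((Xa × Xb) × (Ya × Yb) × Λ)) : Prop :=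
  (∀ xa : Xa, ∀ᵐ ω ∂p, condProb p mYaL {ω' | ω'.1.1 = xa} ω ∈ ({0, 1} : Set ℝ)) ∧
  (∀ xb : Xb, ∀ᵐ ω ∂p, condProb p mYbL {ω' | ω'.1.2 = xb} ω ∈ ({0, 1} : Set ℝ))

end HiddenVariable

section FiberProducts

variable {Xa Xb Ya Yb : Type*} {Λ : Type*}
  [Fintype Xa] [MeasurableSpace Xa] [DiscreteMeasurableSpace Xa]
  [Fintype Xb] [MeasurableSpace Xb] [DiscreteMeasurableSpace Xb]
  [MeasurableSpace Ya] [MeasurableSpace Yb] [MeasurableSpace Λ]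

/-- `p = p_a ⊗_{Y×Λ} p_b`: the h.v. model `p` is the fiber product over `Y × Λ` of its marginals
`p_a` on `Xa × Y × Λ` and `p_b` on `Xb × Y × Λ`, i.e. for all `J ⊆ Xa`, `K ⊆ Xb` and measurable
`M ⊆ Y × Λ`, `p (J × K × M) = ∫_M p_a[J‖𝒴⊗ℒ] ⬝ p_b[K‖𝒴⊗ℒ] dr`, where `r` is the marginal of
`p` on `Y × Λ` and the integrand uses any measurable versions of the conditional
probabilities. -/
def OutcomeFiber (p : Measure ((Xa × Xb) × (Ya × Yb) × Λ)) : Prop :=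
  ∀ (J : Set Xa) (K : Set Xb) (M : Set ((Ya × Yb) × Λ)),
    MeasurableSet J → MeasurableSet K → MeasurableSet M →
    ∀ f g : (Ya × Yb) × Λ → ℝ,
      IsCondVersion (p.map fun ω => (ω.1.1, ω.2))
        (Prod.snd : Xa × ((Ya × Yb) × Λ) → (Ya × Yb) × Λ) {v | v.1 ∈ J} f →
      IsCondVersion (p.map fun ω => (ω.1.2, ω.2))
        (Prod.snd : Xb × ((Ya × Yb) × Λ) → (Ya × Yb) × Λ) {v | v.1 ∈ K} g →
      (p {ω | ω.1.1 ∈ J ∧ ω.1.2 ∈ K ∧ ω.2 ∈ M}).toReal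
        = ∫ w in M, f w * g w ∂(p.map fun ω => ω.2)

/-- `p_a = q_a ⊗_{Ya×Λ} r`: the marginal `p_a` of the h.v. model `p` on `Xa × Y × Λ` is the
fiber product over `Ya × Λ` of the marginals `q_a` (on `Xa × Ya × Λ`) and `r` (on `Y × Λ`),
i.e. for all `J ⊆ Xa`, measurable `K ⊆ Yb` and measurable `L ⊆ Ya × Λ`,
`p_a (J × K × L) = ∫_L q_a[J‖𝒴a⊗ℒ] ⬝ r[K‖𝒴a⊗ℒ] ds`, where `s` is the marginal of `p` on
`Ya × Λ` and the integrand uses any measurable versions of the conditional probabilities. -/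
def ParamFiberA (p : Measure ((Xa × Xb) × (Ya × Yb) × Λ)) : Prop :=
  ∀ (J : Set Xa) (K : Set Yb) (L : Set (Ya × Λ)),
    MeasurableSet J → MeasurableSet K → MeasurableSet L →
    ∀ f g : Ya × Λ → ℝ,
      IsCondVersion (p.map fun ω => (ω.1.1, (ω.2.1.1, ω.2.2)))
        (Prod.snd : Xa × (Ya × Λ) → Ya × Λ) {v | v.1 ∈ J} f →
      IsCondVersion (p.map fun ω => ω.2)
        (fun w : (Ya × Yb) × Λ => (w.1.1, w.2)) {w | w.1.2 ∈ K} g →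
      ((p.map fun ω => (ω.1.1, ω.2))
          {v : Xa × ((Ya × Yb) × Λ) | v.1 ∈ J ∧ v.2.1.2 ∈ K ∧ (v.2.1.1, v.2.2) ∈ L}).toReal
        = ∫ z in L, f z * g z ∂(p.map fun ω => (ω.2.1.1, ω.2.2))

/-- `p_b = q_b ⊗_{Yb×Λ} r`: the statement symmetric to `ParamFiberA`, with the roles of `a`
and `b` interchanged. -/
def ParamFiberB (p : Measure ((Xa × Xb) × (Ya × Yb) × Λ)) : Prop :=
  ∀ (J : Set Xb) (K : Set Ya) (L : Set (Yb × Λ)),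
    MeasurableSet J → MeasurableSet K → MeasurableSet L →
    ∀ f g : Yb × Λ → ℝ,
      IsCondVersion (p.map fun ω => (ω.1.2, (ω.2.1.2, ω.2.2)))
        (Prod.snd : Xb × (Yb × Λ) → Yb × Λ) {v | v.1 ∈ J} f →
      IsCondVersion (p.map fun ω => ω.2)
        (fun w : (Ya × Yb) × Λ => (w.1.2, w.2)) {w | w.1.1 ∈ K} g →
      ((p.map fun ω => (ω.1.2, ω.2))
          {v : Xb × ((Ya × Yb) × Λ) | v.1 ∈ J ∧ v.2.1.1 ∈ K ∧ (v.2.1.2, v.2.2) ∈ L}).toReal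
        = ∫ z in L, f z * g z ∂(p.map fun ω => (ω.2.1.2, ω.2.2))

end FiberProducts

/-!
Conditionally on `𝒴 ⊗ ℒ`, outcome independence says that the law of the joint outcome is the
product of its two marginals at every point; as the outcome spaces are finite, summing over points
extends this to rectangles: `p[J × K‖𝒴⊗ℒ] = p[J‖𝒴⊗ℒ] ⬝ p[K‖𝒴⊗ℒ]`. Integrating over `M ∈ 𝒴 ⊗ ℒ`
gives the fiber product formula, because a version of `p_a[J‖𝒴⊗ℒ]` composed with the projection
is a version of `p[J‖𝒴⊗ℒ]`. Conversely, the fiber product formula says that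
`p[x_a‖𝒴⊗ℒ] ⬝ p[x_b‖𝒴⊗ℒ]` has the same integral as `p[x‖𝒴⊗ℒ]` over every set of `𝒴 ⊗ ℒ`, so the
two agree a.s. by uniqueness of conditional expectation.
-/

section CondProb

variable {Ω : Type*} {m m₀ : MeasurableSpace Ω} {p : Measure Ω} {S : Set Ω}

lemma setIntegral_condProb [IsFiniteMeasure p] (hm : m ≤ m₀) (hS : MeasurableSet S) {s : Set Ω}
    (hs : MeasurableSet[m] s) : ∫ ω in s, condProb p m S ω ∂p = p.real (s ∩ S) := by
  unfold condProb
  rw [setIntegral_condExp hm ((integrable_const (1 : ℝ)).indicator hS) hs,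
    setIntegral_indicator hS, setIntegral_const, smul_eq_mul, mul_one]

lemma abs_condProb_le_one : ∀ᵐ ω ∂p, |condProb p m S ω| ≤ 1 := by
  refine ae_bdd_abs_condExp_of_ae_bdd_abs (.of_forall fun ω => ?_)
  by_cases h : ω ∈ S <;> simp [h]

lemma integrable_condProb_mul (S T : Set Ω) :
    Integrable (fun ω => condProb p m S ω * condProb p m T ω) p :=
  integrable_condExp.bdd_mul integrable_condExp.aestronglyMeasurable abs_condProb_le_one

lemma ae_eq_condProb_of_forall_setIntegral_eq [IsFiniteMeasure p] (hm : m ≤ m₀)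
    (hS : MeasurableSet S) {g : Ω → ℝ} (hgm : StronglyMeasurable[m] g) (hg : Integrable g p)
    (hg_eq : ∀ s, MeasurableSet[m] s → ∫ ω in s, g ω ∂p = p.real (s ∩ S)) :
    g =ᵐ[p] condProb p m S :=
  ae_eq_condExp_of_forall_setIntegral_eq hm ((integrable_const (1 : ℝ)).indicator hS)
    (fun _ _ _ => hg.integrableOn)
    (fun s hs _ => by rw [hg_eq s hs, setIntegral_indicator hS, setIntegral_const, smul_eq_mul,
      mul_one])
    hgm.aestronglyMeasurable

lemma condProb_mem_finset_ae_eq_sum [IsFiniteMeasure p] {γ : Type*} [MeasurableSpace γ]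
    [MeasurableSingletonClass γ] {u : Ω → γ} (hu : Measurable u) (J : Finset γ) :
    condProb p m {ω | u ω ∈ J} =ᵐ[p] fun ω => ∑ c ∈ J, condProb p m {ω' | u ω' = c} ω := by
  classical
  have hind : ({ω | u ω ∈ J}.indicator fun _ => (1 : ℝ))
      = ∑ c ∈ J, {ω | u ω = c}.indicator fun _ => (1 : ℝ) := by
    ext ω
    rw [Finset.sum_apply]
    simp [Set.indicator_apply]
  unfold condProb
  rw [hind]
  refine (condExp_finsetSum (fun c _ => (integrable_const (1 : ℝ)).indicator
    (hu (measurableSet_singleton c))) m).trans (.of_forall fun ω => Finset.sum_apply ω J _)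

end CondProb

section Versions

variable {Ω α Z : Type*} [MeasurableSpace Ω] [MeasurableSpace α] [MeasurableSpace Z]

lemma exists_isCondVersion (q : Measure α) (π : α → Z) (S : Set α) :
    ∃ f, IsCondVersion q π S f := by
  obtain ⟨f, hf, hcomp⟩ :=
    (stronglyMeasurable_condExp (m := MeasurableSpace.comap π inferInstance) (μ := q)
      (f := S.indicator fun _ => (1 : ℝ))).exists_eq_measurable_comp
  exact ⟨f, hf.measurable, by rw [condProb, hcomp]; rfl⟩

lemma IsCondVersion.comp_ae_eq {p : Measure Ω} [IsFiniteMeasure p] {φ : Ω → α} {π : α → Z}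
    {S : Set α} {f : Z → ℝ} (hφ : Measurable φ) (hπ : Measurable π) (hS : MeasurableSet S)
    (hf : IsCondVersion (p.map φ) π S f) :
    (fun ω => f (π (φ ω))) =ᵐ[p]
      condProb p (MeasurableSpace.comap (fun ω => π (φ ω)) inferInstance) (φ ⁻¹' S) := by
  have hfi : Integrable (fun a => f (π a)) (p.map φ) := integrable_condExp.congr hf.2.symm
  refine ae_eq_condProb_of_forall_setIntegral_eq (hπ.comp hφ).comap_le (hφ hS)
    (hf.1.comp (comap_measurable _)).stronglyMeasurable
    ((integrable_map_measure hfi.aestronglyMeasurable hφ.aemeasurable).mp hfi) ?_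
  rintro _ ⟨B, hB, rfl⟩
  calc ∫ ω in (fun ω => π (φ ω)) ⁻¹' B, f (π (φ ω)) ∂p
      = ∫ a in π ⁻¹' B, f (π a) ∂(p.map φ) :=
        (setIntegral_map (hπ hB) hfi.aestronglyMeasurable hφ.aemeasurable).symm
    _ = ∫ a in π ⁻¹' B, condProb (p.map φ) (MeasurableSpace.comap π inferInstance) S a
          ∂(p.map φ) := setIntegral_congr_ae (hπ hB) (hf.2.mono fun _ h _ => h)
    _ = (p.map φ).real (π ⁻¹' B ∩ S) := setIntegral_condProb hπ.comap_le hS ⟨B, hB, rfl⟩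
    _ = p.real ((fun ω => π (φ ω)) ⁻¹' B ∩ φ ⁻¹' S) :=
        map_measureReal_apply hφ ((hπ hB).inter hS)

end Versions

section Factorization

variable {Ω γ δ : Type*} [MeasurableSpace γ] [MeasurableSpace δ]

def CondProbFactorizes (m : MeasurableSpace Ω) [MeasurableSpace Ω] (p : Measure Ω)
    (w : Ω → γ × δ) : Prop :=
  ∀ x : γ × δ, condProb p m {ω | w ω = x} =ᵐ[p]
    fun ω => condProb p m {ω' | (w ω').1 = x.1} ω * condProb p m {ω' | (w ω').2 = x.2} ω

variable {m m₀ : MeasurableSpace Ω} {p : Measure Ω} [IsFiniteMeasure p] [Finite γ] [Finite δ]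
  [MeasurableSingletonClass γ] [MeasurableSingletonClass δ] {w : Ω → γ × δ}

lemma CondProbFactorizes.condProb_rectangle (h : CondProbFactorizes m p w) (hw : Measurable w)
    (J : Set γ) (K : Set δ) :
    condProb p m {ω | (w ω).1 ∈ J ∧ (w ω).2 ∈ K} =ᵐ[p]
      fun ω => condProb p m {ω' | (w ω').1 ∈ J} ω * condProb p m {ω' | (w ω').2 ∈ K} ω := by
  classical
  let J' := J.toFinite.toFinset
  let K' := K.toFinite.toFinset
  have hJK := condProb_mem_finset_ae_eq_sum (p := p) (m := m) hw (J' ×ˢ K')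
  have hJ := condProb_mem_finset_ae_eq_sum (p := p) (m := m) hw.fst J'
  have hK := condProb_mem_finset_ae_eq_sum (p := p) (m := m) hw.snd K'
  simp only [J', K', Finset.mem_product, Set.Finite.mem_toFinset] at hJK hJ hK
  filter_upwards [hJK, hJ, hK, ae_all_iff.2 h] with ω hJKω hJω hKω hω
  rw [hJKω, hJω, hKω, Finset.sum_mul_sum, Finset.sum_product]
  exact Finset.sum_congr rfl fun a _ => Finset.sum_congr rfl fun b _ => hω (a, b)

lemma condProbFactorizes_iff_forall_measureReal_eq_setIntegral (hm : m ≤ m₀)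
    (hw : Measurable w) :
    CondProbFactorizes m p w ↔ ∀ (J : Set γ) (K : Set δ) (s : Set Ω), MeasurableSet[m] s →
      p.real (s ∩ {ω | (w ω).1 ∈ J ∧ (w ω).2 ∈ K})
        = ∫ ω in s, condProb p m {ω' | (w ω').1 ∈ J} ω
            * condProb p m {ω' | (w ω').2 ∈ K} ω ∂p := by
  have hrect : ∀ (J : Set γ) (K : Set δ), MeasurableSet {ω | (w ω).1 ∈ J ∧ (w ω).2 ∈ K} :=
    fun J K => (hw.fst (J.toFinite.measurableSet)).inter (hw.snd K.toFinite.measurableSet)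
  constructor
  · intro h J K s hs
    rw [← setIntegral_condProb hm (hrect J K) hs]
    exact setIntegral_congr_ae (hm s hs) ((h.condProb_rectangle hw J K).mono fun _ h _ => h)
  · intro h x
    have hx := ae_eq_condProb_of_forall_setIntegral_eq hm (hrect {x.1} {x.2})
      (stronglyMeasurable_condExp.mul stronglyMeasurable_condExp)
      (integrable_condProb_mul _ _) fun s hs => (h {x.1} {x.2} s hs).symm
    simp only [Set.mem_singleton_iff, ← Prod.ext_iff] at hx
    exact hx.symm

end Factorization

lemma setIntegral_map_mul_of_isCondVersion {Ω α γ β : Type*} [MeasurableSpace Ω]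
    [MeasurableSpace α] [MeasurableSpace γ] [MeasurableSpace β] {p : Measure Ω}
    [IsFiniteMeasure p] {u : Ω → α} {v : Ω → γ} {T : Ω → β} (hu : Measurable u)
    (hv : Measurable v) (hT : Measurable T) {J : Set α} {K : Set γ} {M : Set β}
    (hJ : MeasurableSet J) (hK : MeasurableSet K) (hM : MeasurableSet M) {f g : β → ℝ}
    (hf : IsCondVersion (p.map fun ω => (u ω, T ω)) Prod.snd {z | z.1 ∈ J} f)
    (hg : IsCondVersion (p.map fun ω => (v ω, T ω)) Prod.snd {z | z.1 ∈ K} g) :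
    ∫ b in M, f b * g b ∂(p.map T)
      = ∫ ω in T ⁻¹' M, condProb p (MeasurableSpace.comap T inferInstance) {ω | u ω ∈ J} ω
          * condProb p (MeasurableSpace.comap T inferInstance) {ω | v ω ∈ K} ω ∂p := by
  rw [setIntegral_map (f := fun b => f b * g b) hM (hf.1.mul hg.1).aestronglyMeasurable
    hT.aemeasurable]
  refine setIntegral_congr_ae (hT hM) ?_
  filter_upwards [hf.comp_ae_eq (hu.prodMk hT) measurable_snd (measurable_fst hJ),
    hg.comp_ae_eq (hv.prodMk hT) measurable_snd (measurable_fst hK)] with ω hfω hgω _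
  rw [hfω, hgω]
  rfl

/-- **Corollary.**  An h.v. model `p` satisfies outcome independence if and only if
`p = p_a ⊗_{Y×Λ} p_b`, the fiber product over `Y × Λ` of its marginals `p_a` on `Xa × Y × Λ`
and `p_b` on `Xb × Y × Λ`. -/
theorem outcomeIndependence_iff_fiberProduct
    {Xa Xb Ya Yb Λ : Type*}
    [Fintype Xa] [MeasurableSpace Xa] [DiscreteMeasurableSpace Xa]
    [Fintype Xb] [MeasurableSpace Xb] [DiscreteMeasurableSpace Xb]
    [MeasurableSpace Ya] [MeasurableSpace Yb] [MeasurableSpace Λ]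
    (p : Measure ((Xa × Xb) × (Ya × Yb) × Λ)) [IsProbabilityMeasure p] :
    OutcomeIndependence p ↔ OutcomeFiber p := by
  have hT : Measurable fun ω : (Xa × Xb) × (Ya × Yb) × Λ => ω.2 := measurable_snd
  have hrect (J : Set Xa) (K : Set Xb) (M : Set ((Ya × Yb) × Λ)) :
      {ω : (Xa × Xb) × (Ya × Yb) × Λ | ω.1.1 ∈ J ∧ ω.1.2 ∈ K ∧ ω.2 ∈ M}
        = (fun ω => ω.2) ⁻¹' M ∩ {ω | ω.1.1 ∈ J ∧ ω.1.2 ∈ K} := by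
    ext; simp only [mem_ofPred_eq, mem_inter_iff, mem_preimage]; tauto
  have hfiber (J : Set Xa) (K : Set Xb) {M : Set ((Ya × Yb) × Λ)} (hM : MeasurableSet M)
      {f g : (Ya × Yb) × Λ → ℝ} :=
    setIntegral_map_mul_of_isCondVersion (p := p) (J := J) (K := K) (f := f) (g := g)
      measurable_fst.fst measurable_fst.snd hT .of_discrete .of_discrete hM
  change CondProbFactorizes (MeasurableSpace.comap (fun ω => ω.2) inferInstance) p
    (fun ω => ω.1) ↔ _
  rw [condProbFactorizes_iff_forall_measureReal_eq_setIntegral hT.comap_le measurable_fst]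
  constructor
  · intro h J K M _ _ hM f g hf hg
    rw [hfiber J K hM hf hg, hrect, ← h J K _ ⟨M, hM, rfl⟩]
    rfl
  · rintro h J K _ ⟨M, hM, rfl⟩
    obtain ⟨f, hf⟩ := exists_isCondVersion (p.map fun ω => (ω.1.1, ω.2)) Prod.snd {z | z.1 ∈ J}
    obtain ⟨g, hg⟩ := exists_isCondVersion (p.map fun ω => (ω.1.2, ω.2)) Prod.snd {z | z.1 ∈ K}
    rw [← hfiber J K hM hf hg, ← h J K M .of_discrete .of_discrete hM f g hf hg, hrect]
    rfl
end

section
/- An h.v. model p satisfies strong determinism if and only if it satisfies both weak determinism and parameter independence. -/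
open MeasureTheory Set

/-! A conditional probability `p[S‖m]` is `{0,1}`-valued exactly when `S` is a.e. `m`-measurable:
its conditional variance is `p[S‖m] - p[S‖m] ^ 2`, which then vanishes, forcing `1_S = p[S‖m]` a.e.
So weak determinism says that every joint outcome is a.e. `𝒴⊗ℒ`-measurable, which for finitely
many outcomes is the same as every local outcome being so (sum over the other party's outcomes,
resp. multiply the two local indicators). For such an event, the `𝒴a⊗ℒ`-conditional probability
is `{0,1}`-valued iff it agrees with the `𝒴⊗ℒ`-conditional one (both then equal the indicator),
so strong determinism and parameter independence coincide. Strong determinism already gives the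
`𝒴⊗ℒ`-measurability, since `𝒴a⊗ℒ ≤ 𝒴⊗ℒ`. -/

open ProbabilityTheory

section ConditionalProbability

variable {Ω : Type*} {m m' m₀ : MeasurableSpace Ω} {μ : Measure[m₀] Ω} {S : Set Ω}

lemma ae_eq_condExp_of_condVar_ae_eq_zero (hm : m ≤ m₀) [IsFiniteMeasure μ] {X : Ω → ℝ}
    (hX : MemLp X 2 μ) (hvar : Var[X; μ | m] =ᵐ[μ] 0) : X =ᵐ[μ] μ[X | m] := by
  have hint : Integrable (fun ω => (X ω - μ[X | m] ω) ^ 2) μ :=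
    (hX.sub (hX.condExp one_le_two)).integrable_sq
  have hzero : ∫ ω, (X ω - μ[X | m] ω) ^ 2 ∂μ = 0 := by
    rw [← integral_condExp hm, ← integral_zero Ω ℝ]
    exact integral_congr_ae hvar
  filter_upwards [(integral_eq_zero_iff_of_nonneg (fun ω => sq_nonneg _) hint).1 hzero]
    with ω hω
  simpa [sub_eq_zero] using hω

lemma condProb_ae_eq_indicator (hm : m ≤ m₀) [IsFiniteMeasure μ] (hS : MeasurableSet S)
    (hSm : AEStronglyMeasurable[m] (S.indicator fun _ => (1 : ℝ)) μ) :
    condProb μ m S =ᵐ[μ] S.indicator fun _ => 1 :=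
  condExp_of_aestronglyMeasurable' hm hSm ((integrable_const 1).indicator hS)

lemma ae_condProb_mem_zero_one_iff (hm : m ≤ m₀) [IsFiniteMeasure μ] (hS : MeasurableSet S) :
    (∀ᵐ ω ∂μ, condProb μ m S ω ∈ ({0, 1} : Set ℝ)) ↔
      AEStronglyMeasurable[m] (S.indicator fun _ => (1 : ℝ)) μ := by
  refine ⟨fun h01 => ?_, fun hSm => ?_⟩
  · have hX : MemLp (S.indicator fun _ => (1 : ℝ)) 2 μ :=
      memLp_indicator_const 2 hS 1 (Or.inr (measure_ne_top μ S))
    have hsq : (S.indicator fun _ => (1 : ℝ)) ^ 2 = S.indicator fun _ => 1 := by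
      ext ω; by_cases hω : ω ∈ S <;> simp [hω]
    have hvar : Var[S.indicator fun _ => (1 : ℝ); μ | m] =ᵐ[μ] 0 := by
      filter_upwards [condVar_ae_eq_condExp_sq_sub_sq_condExp hm hX, h01] with ω hω hω01
      rw [hω, hsq]
      obtain h | h : μ[S.indicator fun _ => (1 : ℝ) | m] ω = 0 ∨
          μ[S.indicator fun _ => (1 : ℝ) | m] ω = 1 := hω01
      all_goals simp [h]
    exact (stronglyMeasurable_condExp.aestronglyMeasurable).congr
      (ae_eq_condExp_of_condVar_ae_eq_zero hm hX hvar).symm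
  · filter_upwards [condProb_ae_eq_indicator hm hS hSm] with ω hω
    rw [hω]
    by_cases hωS : ω ∈ S <;> simp [hωS]

lemma ae_condProb_mem_zero_one_iff_ae_eq (hmm' : m ≤ m') (hm' : m' ≤ m₀) [IsFiniteMeasure μ]
    (hS : MeasurableSet S)
    (hS' : AEStronglyMeasurable[m'] (S.indicator fun _ => (1 : ℝ)) μ) :
    (∀ᵐ ω ∂μ, condProb μ m S ω ∈ ({0, 1} : Set ℝ)) ↔ condProb μ m' S =ᵐ[μ] condProb μ m S := by
  rw [ae_condProb_mem_zero_one_iff (hmm'.trans hm') hS]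
  refine ⟨fun hSm => ?_, fun heq => ?_⟩
  · exact (condProb_ae_eq_indicator hm' hS hS').trans
      (condProb_ae_eq_indicator (hmm'.trans hm') hS hSm).symm
  · exact (stronglyMeasurable_condExp.aestronglyMeasurable).congr
      (heq.symm.trans (condProb_ae_eq_indicator hm' hS hS'))

end ConditionalProbability

lemma aestronglyMeasurable_indicator_comp {Ω C D : Type*} {m m₀ : MeasurableSpace Ω}
    {μ : Measure[m₀] Ω} [Fintype C] {g : Ω → C}
    (hg : ∀ c, AEStronglyMeasurable[m] ({ω | g ω = c}.indicator fun _ => (1 : ℝ)) μ)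
    (φ : C → D) (d : D) :
    AEStronglyMeasurable[m] ({ω | φ (g ω) = d}.indicator fun _ => (1 : ℝ)) μ := by
  classical
  have hsum : ({ω | φ (g ω) = d}.indicator fun _ => (1 : ℝ)) =
      ∑ c ∈ Finset.univ.filter (φ · = d), {ω | g ω = c}.indicator fun _ => 1 := by
    ext ω; simp [Set.indicator_apply, Finset.sum_ite_eq]
  rw [hsum]
  exact Finset.sum_induction _ (AEStronglyMeasurable[m] · μ) (fun _ _ => .add)
    aestronglyMeasurable_zero fun c _ => hg c

section HiddenVariableModel

variable {Xa Xb Ya Yb Λ : Type*} [MeasurableSpace Ya] [MeasurableSpace Yb] [MeasurableSpace Λ]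

lemma mYaL_le_mYL : (mYaL : MeasurableSpace ((Xa × Xb) × (Ya × Yb) × Λ)) ≤ mYL :=
  ((measurable_fst.fst.prodMk measurable_snd).comp (comap_measurable _)).comap_le

lemma mYbL_le_mYL : (mYbL : MeasurableSpace ((Xa × Xb) × (Ya × Yb) × Λ)) ≤ mYL :=
  ((measurable_fst.snd.prodMk measurable_snd).comp (comap_measurable _)).comap_le

variable [MeasurableSpace Xa] [MeasurableSpace Xb]

lemma mYL_le :
    (mYL : MeasurableSpace ((Xa × Xb) × (Ya × Yb) × Λ)) ≤
      (inferInstance : MeasurableSpace ((Xa × Xb) × (Ya × Yb) × Λ)) :=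
  measurable_snd.comap_le

variable [Fintype Xa] [DiscreteMeasurableSpace Xa] [Fintype Xb] [DiscreteMeasurableSpace Xb]
  {p : Measure ((Xa × Xb) × (Ya × Yb) × Λ)}

variable (p) in
def OutcomesAEMeasurableYL : Prop :=
  (∀ xa : Xa, AEStronglyMeasurable[mYL] ({ω | ω.1.1 = xa}.indicator fun _ => (1 : ℝ)) p) ∧
  (∀ xb : Xb, AEStronglyMeasurable[mYL] ({ω | ω.1.2 = xb}.indicator fun _ => (1 : ℝ)) p)

lemma weakDeterminism_iff_outcomesAEMeasurableYL [IsFiniteMeasure p] :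
    WeakDeterminism p ↔ OutcomesAEMeasurableYL p := by
  have hWD : WeakDeterminism p ↔
      ∀ x, AEStronglyMeasurable[mYL] ({ω | ω.1 = x}.indicator fun _ => (1 : ℝ)) p :=
    forall_congr' fun x => ae_condProb_mem_zero_one_iff mYL_le
      (measurable_fst (measurableSet_singleton x))
  rw [hWD]
  refine ⟨fun h => ⟨aestronglyMeasurable_indicator_comp h Prod.fst,
    aestronglyMeasurable_indicator_comp h Prod.snd⟩, fun ⟨ha, hb⟩ x => ?_⟩
  have hx : {ω : (Xa × Xb) × (Ya × Yb) × Λ | ω.1 = x} =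
      {ω | ω.1.1 = x.1} ∩ {ω | ω.1.2 = x.2} := by
    ext ω; simp [Prod.ext_iff]
  rw [hx]
  exact (Set.inter_indicator_one (M₀ := ℝ)) ▸ (ha x.1).mul (hb x.2)

lemma StrongDeterminism.outcomesAEMeasurableYL [IsFiniteMeasure p] (h : StrongDeterminism p) :
    OutcomesAEMeasurableYL p :=
  ⟨fun xa => ((ae_condProb_mem_zero_one_iff (mYaL_le_mYL.trans mYL_le)
      (measurable_fst.fst (measurableSet_singleton xa))).1 (h.1 xa)).mono mYaL_le_mYL,
    fun xb => ((ae_condProb_mem_zero_one_iff (mYbL_le_mYL.trans mYL_le)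
      (measurable_fst.snd (measurableSet_singleton xb))).1 (h.2 xb)).mono mYbL_le_mYL⟩

lemma strongDeterminism_iff_parameterIndependence [IsFiniteMeasure p]
    (h : OutcomesAEMeasurableYL p) : StrongDeterminism p ↔ ParameterIndependence p :=
  and_congr
    (forall_congr' fun xa => ae_condProb_mem_zero_one_iff_ae_eq mYaL_le_mYL mYL_le
      (measurable_fst.fst (measurableSet_singleton xa)) (h.1 xa))
    (forall_congr' fun xb => ae_condProb_mem_zero_one_iff_ae_eq mYbL_le_mYL mYL_le
      (measurable_fst.snd (measurableSet_singleton xb)) (h.2 xb))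

end HiddenVariableModel

/-- **Proposition.**  An h.v. model `p` satisfies strong determinism if and only if it satisfies
both weak determinism and parameter independence. -/
theorem strongDeterminism_iff_weakDeterminism_and_parameterIndependence
    {Xa Xb Ya Yb Λ : Type*}
    [Fintype Xa] [MeasurableSpace Xa] [DiscreteMeasurableSpace Xa]
    [Fintype Xb] [MeasurableSpace Xb] [DiscreteMeasurableSpace Xb]
    [MeasurableSpace Ya] [MeasurableSpace Yb] [MeasurableSpace Λ]
    (p : Measure ((Xa × Xb) × (Ya × Yb) × Λ)) [IsProbabilityMeasure p] :
    StrongDeterminism p ↔ WeakDeterminism p ∧ ParameterIndependence p := by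
  rw [weakDeterminism_iff_outcomesAEMeasurableYL]
  constructor
  · intro hSD
    have hO := hSD.outcomesAEMeasurableYL
    exact ⟨hO, (strongDeterminism_iff_parameterIndependence hO).1 hSD⟩
  · rintro ⟨hO, hPI⟩
    exact (strongDeterminism_iff_parameterIndependence hO).2 hPI
end
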